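/- arXiv:0905.2229 — 3 statements merged into one kernel-verified Lean document; each statement's English description precedes it below -/
import Mathlib

section
/- Let K be a field, let m ≥ 2 be an integer, and work in the polynomial ring K[x,y]. Then the product of ideals ∏_{i=1}^{m-1} (x^{m-i}, y^i) is equal to the ideal J_m generated by the m monomials x^{C(m-i+1,2)} · y^{C(i,2)} for i = 1, ..., m, where C(n,2) = n(n-1)/2 denotes a binomial coefficient. -/
/-! Multiplying out, the product is generated by the monomials `x ^ a * y ^ b` obtained by
picking `y ^ i` for `i` in some `t ⊆ {1, …, m - 1}` and `x ^ (m - i)` for the other `i`, so that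
`b = ∑_{i ∈ t} i` and `a = ∑_{i ∉ t} (m - i)`. These are sums of `k = #t` and `m - 1 - k` distinct
positive integers, hence `b ≥ C(k + 1, 2)` and `a ≥ C(m - k, 2)`: the monomial is a multiple of the
`(k + 1)`-st generator of `J_m`. Conversely, `t = {1, …, j - 1}` gives exactly the `j`-th
generator. -/

open MvPolynomial Finset

namespace Nat

theorem choose_card_two_le_sum (S : Finset ℕ) : (#S).choose 2 ≤ ∑ i ∈ S, i := by
  induction S using Finset.induction_on_max with
  | empty => simp
  | insert a s hlt ih =>
    have ha : a ∉ s := fun h => lt_irrefl a (hlt a h)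
    have hcard : #s ≤ a := by simpa using card_le_card fun x hx => mem_range.2 (hlt x hx)
    have hsucc : (#s + 1).choose 2 = (#s).choose 2 + #s := by
      simpa [add_comm] using choose_succ_succ' (#s) 1
    rw [card_insert_of_notMem ha, sum_insert ha, hsucc]
    omega

theorem choose_card_add_one_two_le_sum {ι : Type*} (S : Finset ι) (f : ι → ℕ)
    (hf : Set.InjOn f S) (hpos : ∀ i ∈ S, 0 < f i) :
    (#S + 1).choose 2 ≤ ∑ i ∈ S, f i := by
  have h0 : 0 ∉ S.image f := by
    simpa using fun i hi => (hpos i hi).ne'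
  have := choose_card_two_le_sum (insert 0 (S.image f))
  rwa [card_insert_of_notMem h0, sum_insert h0, Finset.card_image_of_injOn hf, sum_image hf,
    zero_add] at this

theorem sum_Ico_one_id (n : ℕ) : ∑ i ∈ Ico 1 n, i = n.choose 2 := by
  rcases n with _ | n
  · simp
  · rw [choose_two_right, ← sum_range_id, range_eq_Ico, sum_eq_sum_Ico_succ_bot n.succ_pos]
    simp

end Nat

theorem Finset.exists_subset_prod_eq_prod_sdiff_mul_prod {ι M : Type*} [CommMonoid M]
    [DecidableEq ι] {s : Finset ι} {a b g : ι → M} (h : ∀ i ∈ s, g i = a i ∨ g i = b i) :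
    ∃ t ⊆ s, ∏ i ∈ s, g i = (∏ i ∈ s \ t, a i) * ∏ i ∈ t, b i := by
  classical
  refine ⟨s.filter fun i => g i = b i, filter_subset _ _, ?_⟩
  rw [← prod_sdiff (filter_subset (fun i => g i = b i) s)]
  congr 1
  · refine prod_congr rfl fun i hi => ?_
    obtain ⟨his, hib⟩ := mem_sdiff.1 hi
    exact (h i his).resolve_right fun h' => hib (mem_filter.2 ⟨his, h'⟩)
  · exact prod_congr rfl fun i hi => (mem_filter.1 hi).2

section PowerIdeals

variable {R : Type*} [CommSemiring R] (x y : R) (m : ℕ)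

/-- The ideal `J_m`. -/
abbrev choosePowIdeal : Ideal R :=
  Ideal.span ((fun i : ℕ => x ^ (m - i + 1).choose 2 * y ^ i.choose 2) '' Set.Icc 1 m)

theorem pow_mul_pow_mem_choosePowIdeal {k a b : ℕ} (hk : k < m)
    (ha : (m - k).choose 2 ≤ a) (hb : (k + 1).choose 2 ≤ b) :
    x ^ a * y ^ b ∈ choosePowIdeal x y m := by
  refine Ideal.mem_of_dvd _ (mul_dvd_mul (pow_dvd_pow x ha) (pow_dvd_pow y hb))
    (Ideal.subset_span ⟨k + 1, Set.mem_Icc.2 ⟨by omega, by omega⟩, ?_⟩)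
  simp only [show m - (k + 1) + 1 = m - k by omega]

theorem prod_span_pow_pair_le_choosePowIdeal (hm : 1 ≤ m) :
    ∏ i ∈ Ico 1 m, Ideal.span {x ^ (m - i), y ^ i} ≤ choosePowIdeal x y m := by
  classical
  rw [Ideal.prod_span, Ideal.span_le]
  intro p hp
  obtain ⟨g, hg, rfl⟩ := (Set.mem_finsetProd _ _ _).1 hp
  obtain ⟨t, hts, hprod⟩ := exists_subset_prod_eq_prod_sdiff_mul_prod (s := Ico 1 m)
    (a := fun i => x ^ (m - i)) (b := fun i => y ^ i) fun i hi => by simpa using hg hi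
  rw [hprod, prod_pow_eq_pow_sum, prod_pow_eq_pow_sum]
  have hcard : #t < m := (card_le_card hts).trans_lt (by simp; omega)
  have hsdiff : #(Ico 1 m \ t) = m - 1 - #t := by simp [card_sdiff_of_subset hts]
  refine pow_mul_pow_mem_choosePowIdeal x y m hcard ?_ ?_
  · have := Nat.choose_card_add_one_two_le_sum (Ico 1 m \ t) (m - ·)
      (fun i hi j hj hij => by simp at hi hj hij; omega) fun i hi => by simp at hi; omega
    rwa [hsdiff, show m - 1 - #t + 1 = m - #t by omega] at this
  · exact Nat.choose_card_add_one_two_le_sum t id (Set.injOn_id _)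
      fun i hi => (mem_Ico.1 (hts hi)).1

theorem choosePowIdeal_le_prod_span_pow_pair :
    choosePowIdeal x y m ≤ ∏ i ∈ Ico 1 m, Ideal.span {x ^ (m - i), y ^ i} := by
  rw [Ideal.span_le]
  rintro _ ⟨j, ⟨hj1, hjm⟩, rfl⟩
  rw [SetLike.mem_coe, ← prod_Ico_consecutive _ hj1 hjm, mul_comm]
  beta_reduce
  have hx : x ^ (m - j + 1).choose 2 = ∏ i ∈ Ico j m, x ^ (m - i) := by
    rw [prod_pow_eq_pow_sum, sum_Ico_reflect (fun i => i) j m.le_succ,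
      Nat.add_sub_cancel_left, Nat.sum_Ico_one_id]
    simp only [show m + 1 - j = m - j + 1 by omega]
  have hy : y ^ j.choose 2 = ∏ i ∈ Ico 1 j, y ^ i := by
    rw [prod_pow_eq_pow_sum, Nat.sum_Ico_one_id]
  rw [hx, hy]
  exact Ideal.mul_mem_mul
    (Ideal.prod_mem_prod fun i _ => Ideal.subset_span (by simp))
    (Ideal.prod_mem_prod fun i _ => Ideal.subset_span (by simp))

theorem prod_span_pow_pair_eq_choosePowIdeal (hm : 1 ≤ m) :
    ∏ i ∈ Ico 1 m, Ideal.span {x ^ (m - i), y ^ i} = choosePowIdeal x y m :=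
  le_antisymm (prod_span_pow_pair_le_choosePowIdeal x y m hm)
    (choosePowIdeal_le_prod_span_pow_pair x y m)

end PowerIdeals

/-- The product of ideals `∏_{i=1}^{m-1} (x^{m-i}, y^i)` in `K[x,y]` equals the ideal
`J_m` generated by the monomials `x^(C(m-i+1,2)) * y^(C(i,2))` for `i = 1, ..., m`. -/
theorem stmt_0 (K : Type*) [Field K] (m : ℕ) (hm : 2 ≤ m) :
    (∏ i ∈ Finset.Icc 1 (m - 1),
        Ideal.span {(X 0 : MvPolynomial (Fin 2) K) ^ (m - i),
          (X 1 : MvPolynomial (Fin 2) K) ^ i}) =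
      Ideal.span ((fun i : ℕ =>
          (X 0 : MvPolynomial (Fin 2) K) ^ Nat.choose (m - i + 1) 2 *
            (X 1 : MvPolynomial (Fin 2) K) ^ Nat.choose i 2) '' Set.Icc 1 m) := by
  rw [show Icc 1 (m - 1) = Ico 1 m by ext; simp; omega]
  exact prod_span_pow_pair_eq_choosePowIdeal _ _ m (by omega)
end

section
/- Let m ≥ 2 be an integer. For 1 ≤ i ≤ m-1 let K_i ⊆ ℕ² be the set ((m-i,0) + ℕ²) ∪ ((0,i) + ℕ²), i.e. the set of pairs (a,b) of natural numbers with a ≥ m-i or b ≥ i. Then the Minkowski sum K_1 + K_2 + ... + K_{m-1} (the set of all sums v_1 + ... + v_{m-1} with v_i ∈ K_i) equals the union over i = 1, ..., m of the translated quadrants (C(m-i+1,2), C(i,2)) + ℕ², where C(n,2) = n(n-1)/2. -/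
/-!
Write `v + ℕ² = Ici v`. A point of the sum is `∑ g_j` with `g_j ∈ K_j`. If `S` is the set of `j`
with `g_j` outside `(m - j, 0) + ℕ²` and `T` the remaining indices, the second coordinate is at
least `∑_{j ∈ S} j` and the first at least `∑_{j ∈ T} (m - j)`. Both are sums of distinct positive
integers, hence at least `C(|S| + 1, 2)` and `C(|T| + 1, 2)`; as `|S| + |T| = m - 1`, this is the
corner of index `i = |S| + 1`. Conversely, choosing `(0, j)` for `j < i` and `(m - j, 0)` for
`j ≥ i` hits that corner exactly, and a finite sum of quadrants is a quadrant.
-/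

open Pointwise Finset

section CanonicallyOrdered

variable {M : Type*} [AddCommMonoid M] [PartialOrder M] [CanonicallyOrderedAdd M]

theorem Set.singleton_add_univ_eq_Ici (a : M) : ({a} + Set.univ : Set M) = Set.Ici a := by
  ext x
  simp [Set.singleton_add, le_iff_exists_add, eq_comm]

theorem Set.Ici_add_Ici (a b : M) : Set.Ici a + Set.Ici b = Set.Ici (a + b) := by
  refine (Set.Ici_add_Ici_subset a b).antisymm fun x hx => ?_
  obtain ⟨c, rfl⟩ := exists_add_of_le hx
  exact ⟨a, le_rfl, b + c, le_self_add, (add_assoc a b c).symm⟩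

theorem Finset.sum_Ici {ι : Type*} {s : Finset ι} (hs : s.Nonempty) (f : ι → M) :
    ∑ i ∈ s, Set.Ici (f i) = Set.Ici (∑ i ∈ s, f i) := by
  induction hs using Finset.Nonempty.cons_induction with
  | singleton a => simp
  | cons a s ha hs ih => rw [sum_cons, sum_cons, ih, Set.Ici_add_Ici]

end CanonicallyOrdered

theorem Finset.sum_Ico_one_id (n : ℕ) : ∑ j ∈ Ico 1 n, j = n.choose 2 := by
  rw [Nat.choose_two_right, ← sum_range_id, range_eq_Ico]
  rcases n with _ | n
  · simp
  · rw [sum_eq_sum_Ico_succ_bot n.succ_pos, zero_add]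

theorem Finset.sum_range_card_le_sum (s : Finset ℕ) : ∑ j ∈ range #s, j ≤ ∑ j ∈ s, j := by
  induction s using Finset.induction_on_max with
  | empty => simp
  | insert a s hlt ih =>
    have has : a ∉ s := fun h => (hlt a h).false
    have hcard : #s ≤ a := by simpa using card_le_card fun x hx => mem_range.2 (hlt x hx)
    rw [card_insert_of_notMem has, sum_range_succ, sum_insert has]
    omega

theorem choose_two_le_sum_of_injOn {ι : Type*} {s : Finset ι} {f : ι → ℕ}
    (hf : Set.InjOn f s) (hpos : ∀ i ∈ s, 0 < f i) : (#s + 1).choose 2 ≤ ∑ i ∈ s, f i := by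
  have h0 : 0 ∉ s.image f := by
    simp only [mem_image, not_exists, not_and]
    exact fun i hi h => (hpos i hi).ne' h
  have := sum_range_card_le_sum (insert 0 (s.image f))
  rwa [card_insert_of_notMem h0, card_image_of_injOn hf, sum_insert h0, sum_image hf, zero_add,
    sum_range_id, ← Nat.choose_two_right] at this

theorem exists_corner_le_of_mem_sum_staircase {m : ℕ} (hm : 0 < m) {x : ℕ × ℕ}
    (hx : x ∈ ∑ j ∈ Icc 1 (m - 1), (Set.Ici (m - j, 0) ∪ Set.Ici (0, j))) :
    ∃ i ∈ Icc 1 m, ((m - i + 1).choose 2, i.choose 2) ≤ x := by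
  obtain ⟨g, hg, rfl⟩ := (Set.mem_finsetSum _ _ _).1 hx
  set S := (Icc 1 (m - 1)).filter fun j => (g j).1 < m - j
  set T := (Icc 1 (m - 1)).filter fun j => ¬(g j).1 < m - j
  have hST : #S + #T = m - 1 := by
    rw [card_filter_add_card_filter_not, Nat.card_Icc]
    omega
  have hS : (#S + 1).choose 2 ≤ ∑ j ∈ S, (g j).2 := by
    refine (choose_two_le_sum_of_injOn (f := id) (Set.injOn_id _) fun j hj => ?_).trans
      (sum_le_sum fun j hj => ?_)
    · exact (mem_Icc.1 (mem_filter.1 hj).1).1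
    · obtain ⟨hj, hlt⟩ := mem_filter.1 hj
      simpa [Prod.le_def, hlt.not_ge] using hg hj
  have hT : (#T + 1).choose 2 ≤ ∑ j ∈ T, (g j).1 := by
    refine (choose_two_le_sum_of_injOn (f := (m - ·)) (fun j hj k hk h => ?_) fun j hj => ?_).trans
      (sum_le_sum fun j hj => not_lt.1 (mem_filter.1 hj).2)
    · have := mem_Icc.1 (mem_filter.1 hj).1
      have := mem_Icc.1 (mem_filter.1 hk).1
      simp only at h
      omega
    · have := mem_Icc.1 (mem_filter.1 hj).1
      omega
  refine ⟨#S + 1, mem_Icc.2 ⟨by omega, by omega⟩, ?_, ?_⟩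
  · rw [show m - (#S + 1) + 1 = #T + 1 by omega, Prod.fst_sum]
    exact hT.trans (sum_le_sum_of_subset (filter_subset _ _))
  · rw [Prod.snd_sum]
    exact hS.trans (sum_le_sum_of_subset (filter_subset _ _))

theorem sum_staircase_witness_eq_corner {m i : ℕ} (hi : 1 ≤ i) (him : i ≤ m) :
    ∑ j ∈ Ico 1 m, (if j < i then ((0, j) : ℕ × ℕ) else (m - j, 0)) =
      ((m - i + 1).choose 2, i.choose 2) := by
  rw [← sum_Ico_consecutive _ hi him,
    sum_congr rfl fun j hj => if_pos (mem_Ico.1 hj).2,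
    sum_congr rfl fun j hj => if_neg (mem_Ico.1 hj).1.not_gt]
  ext
  · simp only [Prod.fst_add, Prod.fst_sum, sum_const_zero, zero_add]
    rw [sum_Ico_reflect (fun j => j) i (Nat.le_succ m), Nat.add_sub_cancel_left, sum_Ico_one_id,
      Nat.sub_add_comm him]
  · simp [Prod.snd_sum, sum_Ico_one_id]

theorem Ici_corner_subset_sum_staircase {m i : ℕ} (hm : 2 ≤ m) (hi : 1 ≤ i) (him : i ≤ m) :
    Set.Ici ((m - i + 1).choose 2, i.choose 2) ⊆
      ∑ j ∈ Icc 1 (m - 1), (Set.Ici (m - j, 0) ∪ Set.Ici (0, j)) := by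
  have hIcc : Icc 1 (m - 1) = Ico 1 m := by ext; simp only [mem_Icc, mem_Ico]; omega
  rw [← sum_staircase_witness_eq_corner hi him, ← sum_Ici ⟨1, mem_Ico.2 ⟨le_rfl, hm⟩⟩, hIcc]
  refine Set.finsetSum_subset_finsetSum _ _ _ fun j _ => ?_
  split_ifs
  exacts [Set.subset_union_right, Set.subset_union_left]

/-- The Minkowski sum of the staircase cones `K_i = ((m-i,0) + ℕ²) ∪ ((0,i) + ℕ²)`,
`i = 1, ..., m-1`, equals the union of the translated quadrants
`(C(m-i+1,2), C(i,2)) + ℕ²`, `i = 1, ..., m`. -/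
theorem stmt_1 (m : ℕ) (hm : 2 ≤ m) :
    (∑ i ∈ Finset.Icc 1 (m - 1),
        (({((m - i, 0) : ℕ × ℕ)} + (Set.univ : Set (ℕ × ℕ))) ∪
          ({((0, i) : ℕ × ℕ)} + (Set.univ : Set (ℕ × ℕ))))) =
      ⋃ i ∈ Finset.Icc 1 m,
        ({((Nat.choose (m - i + 1) 2, Nat.choose i 2) : ℕ × ℕ)} +
          (Set.univ : Set (ℕ × ℕ))) := by
  simp only [Set.singleton_add_univ_eq_Ici]
  refine subset_antisymm (fun x hx => ?_) (Set.iUnion₂_subset fun i hi => ?_)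
  · obtain ⟨i, hi, hix⟩ := exists_corner_le_of_mem_sum_staircase (by omega) hx
    exact Set.mem_iUnion₂.2 ⟨i, hi, hix⟩
  · exact Ici_corner_subset_sum_staircase hm (mem_Icc.1 hi).1 (mem_Icc.1 hi).2
end

section
/- Let m ≥ 2 be an integer and let 1 ≤ i ≤ m-1. In the polynomial ring ℂ[x,y], the quotient ring ℂ[x,y]/(x^{m-i} - y^i, x·y) is a finite-dimensional ℂ-vector space of dimension m. -/
/-!
In `K[x,y]/(x^a - y^b, xy)` one has `x^(a+1) = x y^b = 0` and `y^(b+1) = y x^a = 0`, so every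
monomial reduces to one of `1, x, …, x^(a-1), y, …, y^b`, and these `a + b` classes span.
They are independent because of `a + b` linear functionals that vanish on the ideal and are dual
to them: the coefficients of `x^j` (`j < a`) in the restriction `p(x, 0)` to the x-axis, of `y^k`
(`k < b`) in the restriction `p(0, y)` to the y-axis, and the sum of the coefficient of `y^b` in
`p(0, y)` and of `x^a` in `p(x, 0)`, which kills `u (x^a - y^b)` since both equal `± u(0, 0)`.
-/

open MvPolynomial

noncomputable section

variable {K : Type*} [CommRing K] {a b : ℕ}

variable (K) in
def nodalIdeal (a b : ℕ) : Ideal (MvPolynomial (Fin 2) K) :=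
  Ideal.span {X 0 ^ a - X 1 ^ b, X 0 * X 1}

variable (a b) in
def axisMonomial : Fin a ⊕ Fin b → MvPolynomial (Fin 2) K :=
  Sum.elim (fun j => X 0 ^ (j : ℕ)) (fun k => X 1 ^ ((k : ℕ) + 1))

variable (K a b) in
def axisCoeffs : MvPolynomial (Fin 2) K →ₗ[K] (Fin a ⊕ Fin b → K) :=
  LinearMap.pi <| Sum.elim
    (fun j => (Polynomial.lcoeff K j).comp (aeval ![Polynomial.X, 0]).toLinearMap)
    (fun k => (Polynomial.lcoeff K (k + 1)).comp (aeval ![0, Polynomial.X]).toLinearMap +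
      if (k : ℕ) + 1 = b then (Polynomial.lcoeff K a).comp (aeval ![Polynomial.X, 0]).toLinearMap
      else 0)

@[simp]
lemma axisCoeffs_inl (p : MvPolynomial (Fin 2) K) (j : Fin a) :
    axisCoeffs K a b p (.inl j) = (aeval ![Polynomial.X, 0] p).coeff j := rfl

@[simp]
lemma axisCoeffs_inr (p : MvPolynomial (Fin 2) K) (k : Fin b) :
    axisCoeffs K a b p (.inr k) = (aeval ![0, Polynomial.X] p).coeff (k + 1) +
      if (k : ℕ) + 1 = b then (aeval ![Polynomial.X, 0] p).coeff a else 0 := by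
  by_cases h : (k : ℕ) + 1 = b <;> simp [axisCoeffs, h]

lemma coeff_zero_aeval {σ : Type*} (f : σ → Polynomial K) (hf : ∀ i, (f i).coeff 0 = 0)
    (p : MvPolynomial σ K) : (aeval f p).coeff 0 = constantCoeff p := by
  rw [Polynomial.coeff_zero_eq_aeval_zero, ← AlgHom.comp_apply, comp_aeval]
  simp [← Polynomial.coeff_zero_eq_aeval_zero, hf]

lemma axisCoeffs_axisMonomial (e : Fin a ⊕ Fin b) :
    axisCoeffs K a b (axisMonomial a b e) = Pi.single e 1 := by
  funext e'
  rcases e with j | k <;> rcases e' with j' | k'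
  · simp [axisMonomial, Polynomial.coeff_X_pow, Pi.single_apply, Fin.val_inj]
  · rcases eq_or_ne (j : ℕ) 0 with hj | hj <;>
      simp [axisMonomial, Polynomial.coeff_X_pow, Polynomial.coeff_one, hj, j.isLt.ne', j.pos.ne']
  · simp [axisMonomial]
  · simp [axisMonomial, Polynomial.coeff_X_pow, Pi.single_apply, Fin.val_inj]

lemma axisCoeffs_eq_zero_of_mem (ha : a ≠ 0) (hb : b ≠ 0) {p : MvPolynomial (Fin 2) K}
    (hp : p ∈ nodalIdeal K a b) : axisCoeffs K a b p = 0 := by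
  obtain ⟨u, w, rfl⟩ := Ideal.mem_span_pair.mp hp
  funext e
  rcases e with j | k
  · simp [zero_pow hb, Polynomial.coeff_mul_X_pow', not_le.mpr j.isLt]
  · have hX := coeff_zero_aeval ![Polynomial.X, 0] (by simp [Fin.forall_fin_two]) u
    have hY := coeff_zero_aeval ![0, Polynomial.X] (by simp [Fin.forall_fin_two]) u
    have hkb : b ≤ (k : ℕ) + 1 ↔ (k : ℕ) + 1 = b := by omega
    simp [zero_pow hb, zero_pow ha, Polynomial.coeff_mul_X_pow', hX, hY, hkb]

variable (K a b) in
abbrev nodalMk : MvPolynomial (Fin 2) K →ₐ[K] MvPolynomial (Fin 2) K ⧸ nodalIdeal K a b :=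
  Ideal.Quotient.mkₐ K (nodalIdeal K a b)

lemma nodalMk_X_zero_mul_X_one : nodalMk K a b (X 0) * nodalMk K a b (X 1) = 0 := by
  rw [← map_mul, Ideal.Quotient.mkₐ_eq_mk, Ideal.Quotient.eq_zero_iff_mem]
  exact Ideal.subset_span (by simp)

lemma nodalMk_X_zero_pow : nodalMk K a b (X 0) ^ a = nodalMk K a b (X 1) ^ b := by
  rw [← map_pow, ← map_pow, ← sub_eq_zero, ← map_sub, Ideal.Quotient.mkₐ_eq_mk,
    Ideal.Quotient.eq_zero_iff_mem]
  exact Ideal.subset_span (by simp)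

lemma nodalMk_X_zero_pow_succ (hb : b ≠ 0) : nodalMk K a b (X 0) ^ (a + 1) = 0 := by
  obtain ⟨b, rfl⟩ := Nat.exists_eq_add_one_of_ne_zero hb
  linear_combination nodalMk K a _ (X 0) * nodalMk_X_zero_pow (K := K) +
    nodalMk K a _ (X 1) ^ b * nodalMk_X_zero_mul_X_one (K := K)

lemma nodalMk_X_one_pow_succ (ha : a ≠ 0) : nodalMk K a b (X 1) ^ (b + 1) = 0 := by
  obtain ⟨a, rfl⟩ := Nat.exists_eq_add_one_of_ne_zero ha
  linear_combination -nodalMk K _ b (X 1) * nodalMk_X_zero_pow (K := K) +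
    nodalMk K _ b (X 0) ^ a * nodalMk_X_zero_mul_X_one (K := K)

lemma nodalMk_X_pow_mul_X_pow_mem_span (ha : a ≠ 0) (hb : b ≠ 0) (j k : ℕ) :
    nodalMk K a b (X 0 ^ j * X 1 ^ k) ∈
      Submodule.span K (Set.range (nodalMk K a b ∘ axisMonomial a b)) := by
  have mem (e : Fin a ⊕ Fin b) : nodalMk K a b (axisMonomial a b e) ∈
      Submodule.span K (Set.range (nodalMk K a b ∘ axisMonomial a b)) :=
    Submodule.subset_span ⟨e, rfl⟩
  rw [map_mul, map_pow, map_pow]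
  rcases Nat.eq_zero_or_pos k with rfl | hk
  · rw [pow_zero, mul_one]
    rcases lt_trichotomy j a with hj | rfl | hj
    · simpa [axisMonomial] using mem (.inl ⟨j, hj⟩)
    · rw [nodalMk_X_zero_pow]
      simpa [axisMonomial, Nat.sub_add_cancel (Nat.one_le_iff_ne_zero.mpr hb)]
        using mem (.inr ⟨b - 1, by omega⟩)
    · rw [pow_eq_zero_of_le hj (nodalMk_X_zero_pow_succ hb)]
      exact zero_mem _
  rcases Nat.eq_zero_or_pos j with rfl | hj
  · rw [pow_zero, one_mul]
    rcases le_or_gt k b with hkb | hkb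
    · simpa [axisMonomial, Nat.sub_add_cancel hk] using mem (.inr ⟨k - 1, by omega⟩)
    · rw [pow_eq_zero_of_le hkb (nodalMk_X_one_pow_succ ha)]
      exact zero_mem _
  obtain ⟨j, rfl⟩ := Nat.exists_eq_add_one_of_ne_zero hj.ne'
  obtain ⟨k, rfl⟩ := Nat.exists_eq_add_one_of_ne_zero hk.ne'
  rw [pow_succ, pow_succ, mul_mul_mul_comm, nodalMk_X_zero_mul_X_one, mul_zero]
  exact zero_mem _

lemma span_range_nodalMk_axisMonomial (ha : a ≠ 0) (hb : b ≠ 0) :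
    Submodule.span K (Set.range (nodalMk K a b ∘ axisMonomial a b)) = ⊤ := by
  refine Submodule.eq_top_iff'.mpr fun z => ?_
  obtain ⟨p, rfl⟩ := Ideal.Quotient.mkₐ_surjective K _ z
  induction p using MvPolynomial.induction_on' with
  | add p q hp hq => rw [map_add]; exact add_mem hp hq
  | monomial u c =>
    rw [monomial_eq, Finsupp.prod_fintype _ _ (fun _ => pow_zero _), Fin.prod_univ_two,
      ← smul_eq_C_mul, map_smul]
    exact Submodule.smul_mem _ _ (nodalMk_X_pow_mul_X_pow_mem_span ha hb _ _)

lemma linearIndependent_nodalMk_axisMonomial (ha : a ≠ 0) (hb : b ≠ 0) :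
    LinearIndependent K (nodalMk K a b ∘ axisMonomial a b) := by
  rw [Fintype.linearIndependent_iff]
  intro c hc e
  have hmem : ∑ e, c e • axisMonomial a b e ∈ nodalIdeal K a b := by
    rw [← Ideal.Quotient.eq_zero_iff_mem, ← Ideal.Quotient.mkₐ_eq_mk K, map_sum]
    simpa only [map_smul, Function.comp_apply] using hc
  simpa only [map_sum, map_smul, axisCoeffs_axisMonomial, ← Pi.single_smul', smul_eq_mul,
    mul_one, Finset.univ_sum_single, Pi.zero_apply]
    using congrFun (axisCoeffs_eq_zero_of_mem ha hb hmem) e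

variable (K) in
def nodalBasis (ha : a ≠ 0) (hb : b ≠ 0) :
    Module.Basis (Fin a ⊕ Fin b) K (MvPolynomial (Fin 2) K ⧸ nodalIdeal K a b) :=
  .mk (linearIndependent_nodalMk_axisMonomial ha hb) (span_range_nodalMk_axisMonomial ha hb).ge

lemma finrank_quotient_nodalIdeal [Nontrivial K] (ha : a ≠ 0) (hb : b ≠ 0) :
    Module.finrank K (MvPolynomial (Fin 2) K ⧸ nodalIdeal K a b) = a + b := by
  simp [Module.finrank_eq_card_basis (nodalBasis K ha hb)]

end

theorem stmt_3_general (m i : ℕ) (hi1 : 1 ≤ i) (hi2 : i ≤ m - 1) :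
    FiniteDimensional ℂ
      (MvPolynomial (Fin 2) ℂ ⧸
        Ideal.span {X 0 ^ (m - i) - X 1 ^ i,
          (X 0 : MvPolynomial (Fin 2) ℂ) * X 1}) ∧
    Module.finrank ℂ
      (MvPolynomial (Fin 2) ℂ ⧸
        Ideal.span {X 0 ^ (m - i) - X 1 ^ i,
          (X 0 : MvPolynomial (Fin 2) ℂ) * X 1}) = m := by
  have ha : m - i ≠ 0 := by omega
  have hb : i ≠ 0 := by omega
  exact ⟨.of_basis (nodalBasis ℂ ha hb), (finrank_quotient_nodalIdeal ha hb).trans (by omega)⟩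

/-- `ℂ[x,y]/(x^{m-i} - y^i, x·y)` has ℂ-dimension `m`. -/
theorem stmt_3 (m i : ℕ) (hm : 2 ≤ m) (hi1 : 1 ≤ i) (hi2 : i ≤ m - 1) :
    FiniteDimensional ℂ
      (MvPolynomial (Fin 2) ℂ ⧸
        Ideal.span {X 0 ^ (m - i) - X 1 ^ i,
          (X 0 : MvPolynomial (Fin 2) ℂ) * X 1}) ∧
    Module.finrank ℂ
      (MvPolynomial (Fin 2) ℂ ⧸
        Ideal.span {X 0 ^ (m - i) - X 1 ^ i,
          (X 0 : MvPolynomial (Fin 2) ℂ) * X 1}) = m :=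
  stmt_3_general m i hi1 hi2
end
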